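/- Let C be an F-linear abelian rigid monoidal category (every object has left and right duals) whose unit object 1 is simple. If X and Y are nonzero objects of C, then X ⊗ Y is nonzero. -/
import Mathlib

/-!
STATEMENT 17: Let `C` be an `F`-linear abelian rigid monoidal category (every object
has left and right duals) whose unit object `1` is simple.  If `X` and `Y` are nonzero
objects of `C`, then `X ⊗ Y` is nonzero.
-/

open CategoryTheory Limits MonoidalCategory

theorem tensor_nonzero_of_nonzero
    (F : Type*) [Field F] [CharZero F]
    (C : Type*) [Category C] [Abelian C]
    [CategoryTheory.Linear F C]
    [MonoidalCategory C] [MonoidalPreadditive C] [MonoidalLinear F C]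
    [RigidCategory C] [Simple (𝟙_ C)]
    (X Y : C) (hX : ¬ IsZero X) (hY : ¬ IsZero Y) :
    ¬ IsZero (X ⊗ Y) := by
  intro hXY
  apply hX
  -- The coevaluation `η : 𝟙 ⟶ Y ⊗ Yᘁ` is nonzero, by the triangle identity.
  have hη : (η_ Y (Yᘁ)) ≠ 0 := by
    intro h
    apply hY
    rw [IsZero.iff_id_eq_zero]
    have tri := ExactPairing.evaluation_coevaluation Y (Yᘁ)
    calc 𝟙 Y = (λ_ Y).inv ≫ ((λ_ Y).hom ≫ (ρ_ Y).inv) ≫ (ρ_ Y).hom := by simp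
    _ = (λ_ Y).inv ≫ (η_ Y (Yᘁ) ▷ Y ≫ (α_ _ _ _).hom ≫ Y ◁ ε_ _ _) ≫ (ρ_ Y).hom := by
        rw [tri]
    _ = 0 := by rw [h]; simp
  haveI : Mono (η_ Y (Yᘁ)) := mono_of_nonzero_from_simple hη
  -- `tensorLeft X` is a right adjoint, hence preserves monomorphisms.
  haveI : (tensorLeft X).PreservesMonomorphisms :=
    Functor.preservesMonomorphisms_of_adjunction (tensorLeftAdjunction X (Xᘁ))
  have hmono : Mono ((tensorLeft X).map (η_ Y (Yᘁ))) := (tensorLeft X).map_mono _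
  have hmono' : Mono (X ◁ η_ Y (Yᘁ)) := by simpa using hmono
  -- `(X ⊗ Y) ⊗ Yᘁ` is zero, hence so is `X ⊗ (Y ⊗ Yᘁ)`.
  have h1 : IsZero ((X ⊗ Y) ⊗ (Yᘁ)) := by
    rw [IsZero.iff_id_eq_zero] at hXY ⊢
    rw [← id_whiskerRight, hXY]
    simp
  have h2 : IsZero (X ⊗ (Y ⊗ (Yᘁ))) := h1.of_iso (α_ X Y (Yᘁ)).symm
  -- `X` embeds into a zero object via `(ρ_ X).inv ≫ X ◁ η`.
  haveI : Mono ((ρ_ X).inv ≫ X ◁ η_ Y (Yᘁ)) := mono_comp _ _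
  exact IsZero.of_mono ((ρ_ X).inv ≫ X ◁ η_ Y (Yᘁ)) h2
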